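/- arXiv:2307.05569 — 3 statements merged into one kernel-verified Lean document; each statement's English description precedes it below -/
import Mathlib

section
/- Let D=(V,A) be a digraph with n=|V| and f: V → ℙ a map to the positive integers. Then ∑_{σ} ∑_{F} (−1)^{|F|} equals the number of (f,D)-friendly V-listings, where the outer sum ranges over all permutations σ of V with f∘σ = f, and the inner sum ranges over all linear subsets F of A_σ ∩ A. -/
open scoped Classical

noncomputable section

/-- The power sum `p_k = x_1^k + x_2^k + ⋯` as a formal power series over `R`
in countably many variables indexed by the positive integers. -/
def pSumR (R : Type) [CommRing R] (k : ℕ) : MvPowerSeries ℕ+ R :=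
  fun d => if ∃ i : ℕ+, d = Finsupp.single i k then 1 else 0

/-- The power sum `p_k` over `ℤ`. -/
def pSum (k : ℕ) : MvPowerSeries ℕ+ ℤ := pSumR ℤ k

/-- The fundamental quasisymmetric function `L_{I,n}` (with positions 0-indexed):
its coefficient at a monomial `d` is the number of weakly increasing `n`-tuples
`(i_0, …, i_{n-1})` of positive integers, strictly increasing at the positions in `I`,
whose associated monomial `x_{i_0} ⋯ x_{i_{n-1}}` is `d`. -/
def Lfun (n : ℕ) (I : Set ℕ) : MvPowerSeries ℕ+ ℤ :=
  fun d =>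
    ((Set.ncard {i : Fin n → ℕ+ |
        Monotone i ∧
        (∀ (p : ℕ) (h : p + 1 < n), p ∈ I → i ⟨p, Nat.lt_of_succ_lt h⟩ < i ⟨p + 1, h⟩) ∧
        (∑ k : Fin n, Finsupp.single (i k) 1) = d}) : ℤ)

/-- The descent set `Des(w, D)` (0-indexed) of the `V`-listing `w = (e 0, e 1, …, e (n-1))`
with respect to the digraph with arc set `A`. -/
def descents {V : Type} (A : Set (V × V)) {n : ℕ} (e : Fin n ≃ V) : Set ℕ :=
  {p | ∃ h : p + 1 < n, (e ⟨p, Nat.lt_of_succ_lt h⟩, e ⟨p + 1, h⟩) ∈ A}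

/-- The Redei–Berge symmetric function `U_D` of the digraph `D = (V, A)`. -/
def redeiBerge (V : Type) [Fintype V] [DecidableEq V] (A : Set (V × V)) :
    MvPowerSeries ℕ+ ℤ :=
  ∑ e : Fin (Fintype.card V) ≃ V, Lfun (Fintype.card V) (descents A e)

/-- The cycles of a permutation `σ`, each represented by its set of entries
(i.e. by the corresponding orbit of `σ`). -/
def cyclesOf {V : Type} [Fintype V] [DecidableEq V] (σ : Equiv.Perm V) :
    Finset (Finset V) :=
  Finset.univ.image fun v => Finset.univ.filter fun u => σ.SameCycle v u

/-- `p_{type σ}`: the product of `p_{ℓ(γ)}` over all cycles `γ` of `σ`. -/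
def pType {V : Type} [Fintype V] [DecidableEq V] (σ : Equiv.Perm V) :
    MvPowerSeries ℕ+ ℤ :=
  ∏ O ∈ cyclesOf σ, pSum O.card

/-- `φ(σ) = ∑ (ℓ(γ) - 1)`, summed over all cycles `γ` of `σ` that are `D`-cycles.
A cycle of `σ` with orbit `O` is a `D`-cycle iff all its cyclic arcs `(u, σ u)`
(for `u ∈ O`) lie in `A`. -/
def phi {V : Type} [Fintype V] [DecidableEq V] (A : Set (V × V)) (σ : Equiv.Perm V) : ℕ :=
  ∑ O ∈ (cyclesOf σ).filter (fun O => ∀ u ∈ O, (u, σ u) ∈ A), (O.card - 1)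

/-- `σ ∈ S_V(D, D̄)`: each cycle of `σ` is a `D`-cycle or a `D̄`-cycle. -/
def memSVDDbar {V : Type} [Fintype V] [DecidableEq V] (A : Set (V × V))
    (σ : Equiv.Perm V) : Prop :=
  ∀ O ∈ cyclesOf σ, (∀ u ∈ O, (u, σ u) ∈ A) ∨ (∀ u ∈ O, (u, σ u) ∉ A)

/-- `σ ∈ S_V(D)`: each nontrivial cycle of `σ` is a `D`-cycle. -/
def memSVD {V : Type} [Fintype V] [DecidableEq V] (A : Set (V × V))
    (σ : Equiv.Perm V) : Prop :=
  ∀ O ∈ cyclesOf σ, 1 < O.card → ∀ u ∈ O, (u, σ u) ∈ A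

/-- `ψ(σ)`: the number of nontrivial cycles of `σ`. -/
def psi {V : Type} [Fintype V] [DecidableEq V] (σ : Equiv.Perm V) : ℕ :=
  ((cyclesOf σ).filter fun O => 1 < O.card).card

/-- The digraph `(V, A)` is a tournament: no loops, and for any two distinct vertices
`u, v`, exactly one of `(u,v)` and `(v,u)` is an arc. -/
def IsTournament {V : Type} (A : Set (V × V)) : Prop :=
  (∀ u : V, (u, u) ∉ A) ∧ ∀ u v : V, u ≠ v → Xor' ((u, v) ∈ A) ((v, u) ∈ A)

/-- The number of Hamiltonian paths of the digraph `(W, B)` (the empty list counts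
as a Hamiltonian path when `W` is empty). -/
def hampCount (W : Type) [Fintype W] (B : Set (W × W)) : ℕ :=
  Set.ncard {w : List W | w.Nodup ∧ (∀ x : W, x ∈ w) ∧ w.Chain' fun a b => (a, b) ∈ B}

/-- `A_σ = {(v, σ v) : v ∈ V}`. -/
def ApermSet {V : Type} (σ : Equiv.Perm V) : Set (V × V) :=
  Set.range fun v => (v, σ v)

/-- The arc set of a tuple (encoded as a list): the set of its consecutive pairs. -/
def arcsList {V : Type} (p : List V) : Set (V × V) := {a | a ∈ p.zip p.tail}

/-- `C` is a path cover of `V`: a set of paths of `V` (nonempty tuples of distinct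
elements) such that each element of `V` belongs to exactly one of these paths. -/
def IsPathCover (V : Type) (C : Set (List V)) : Prop :=
  (∀ p ∈ C, p ≠ [] ∧ p.Nodup) ∧ ∀ v : V, ∃! p, p ∈ C ∧ v ∈ p

/-- The arc set of a path cover. -/
def arcsCover {V : Type} (C : Set (List V)) : Set (V × V) :=
  ⋃ p ∈ C, arcsList p

/-- A subset `F ⊆ V × V` is linear if it is the arc set of some path cover of `V`. -/
def IsLinear (V : Type) (F : Set (V × V)) : Prop :=
  ∃ C : Set (List V), IsPathCover V C ∧ F = arcsCover C

/-!
Swap the two sums on the left: it becomes `∑_F (-1)^|F| · #{σ | f ∘ σ = f, F ⊆ A_σ}` over the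
linear `F ⊆ A`. On the right, a weakly `f`-increasing listing `w` is friendly iff the set of its
arcs in `A` joining vertices of equal `f`-value is empty, and inclusion–exclusion over subsets
`F` of that set turns the count into `∑_F (-1)^|F| · #{w | F ⊆ Arcs w}`. Both inner counts vanish
unless `F ⊆ A` is linear with `f` constant along its arcs, and then they agree: contracting an
arc `(a, b)` of `F` that ends a path (deleting `b`, and replacing `σ` by `σ ∘ (a b)`) is a
bijection on both sides, which reduces to `F = ∅`. There the `f`-preserving permutations act
simply transitively on the weakly increasing listings.
-/

namespace FriendlyListing

variable {α : Type}

@[simp] theorem arcsList_nil : arcsList ([] : List α) = ∅ := by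
  ext; simp [arcsList]

@[simp] theorem arcsList_singleton (a : α) : arcsList [a] = ∅ := by
  ext; simp [arcsList]

theorem arcsList_cons_cons (a b : α) (l : List α) :
    arcsList (a :: b :: l) = insert (a, b) (arcsList (b :: l)) := by
  ext; simp [arcsList]

theorem mem_arcsList_cons_iff {u v a : α} {l : List α} :
    (u, v) ∈ arcsList (a :: l) ↔ (u = a ∧ l.head? = some v) ∨ (u, v) ∈ arcsList l := by
  rcases l with _ | ⟨b, l⟩
  · simp
  · simp [arcsList_cons_cons, eq_comm]

theorem mem_arcsList_cons_of_ne {u v a : α} {l : List α} (hu : u ≠ a) :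
    (u, v) ∈ arcsList (a :: l) ↔ (u, v) ∈ arcsList l := by
  simp [mem_arcsList_cons_iff, hu]

theorem mem_arcsList_iff {u v : α} {w : List α} :
    (u, v) ∈ arcsList w ↔ ∃ l r, w = l ++ u :: v :: r := by
  induction w with
  | nil => simp
  | cons a t ih =>
    rcases t with _ | ⟨b, t⟩
    · simp only [arcsList_singleton, Set.mem_empty_iff_false, false_iff]
      rintro ⟨l, r, h⟩
      have := congrArg List.length h
      simp at this
      omega
    · rw [arcsList_cons_cons, Set.mem_insert_iff, ih, Prod.mk.injEq]
      constructor
      · rintro (⟨rfl, rfl⟩ | ⟨l, r, h⟩)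
        · exact ⟨[], t, rfl⟩
        · exact ⟨a :: l, r, by simp [h]⟩
      · rintro ⟨_ | ⟨c, l⟩, r, h⟩
        · simp_all
        · simp only [List.cons_append, List.cons.injEq] at h
          exact Or.inr ⟨l, r, h.2⟩

theorem isChain_iff_forall_mem_arcsList {R : α → α → Prop} {w : List α} :
    w.IsChain R ↔ ∀ p ∈ arcsList w, R p.1 p.2 := by
  rw [List.isChain_iff_forall_rel_of_append_cons_cons]
  constructor
  · rintro h ⟨u, v⟩ huv
    obtain ⟨l, r, rfl⟩ := mem_arcsList_iff.1 huv
    exact h rfl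
  · rintro h u v l r rfl
    exact h (u, v) (mem_arcsList_iff.2 ⟨l, r, rfl⟩)

theorem arcsList_subset_of_infix {p w : List α} (h : p <:+: w) : arcsList p ⊆ arcsList w := by
  obtain ⟨s, t, rfl⟩ := h
  rintro ⟨u, v⟩ huv
  obtain ⟨l, r, rfl⟩ := mem_arcsList_iff.1 huv
  exact mem_arcsList_iff.2 ⟨s ++ l, r ++ t, by simp⟩

theorem arcsList_append_cons (l : List α) (a : α) (r : List α) :
    arcsList (l ++ a :: r) = arcsList (l ++ [a]) ∪ arcsList (a :: r) := by
  induction l with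
  | nil => simp
  | cons c l ih =>
    rcases l with _ | ⟨d, l⟩
    · simp [arcsList_cons_cons]
    · simp only [List.cons_append] at ih ⊢
      rw [arcsList_cons_cons, arcsList_cons_cons, ih, Set.insert_union]

theorem idxOf_eq_add_one_of_mem_arcsList {w : List α} (hw : w.Nodup) {u v : α}
    (h : (u, v) ∈ arcsList w) : w.idxOf v = w.idxOf u + 1 := by
  obtain ⟨l, r, rfl⟩ := mem_arcsList_iff.1 h
  have hw' := List.nodup_append.1 hw
  have hu : u ∉ l := fun hu => hw'.2.2 u hu u List.mem_cons_self rfl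
  have hv : v ∉ l := fun hv => hw'.2.2 v hv v (by simp) rfl
  have huv : u ≠ v := fun e => (List.nodup_cons.1 hw'.2.1).1 (by simp [e])
  rw [List.idxOf_append_of_notMem hu, List.idxOf_append_of_notMem hv, List.idxOf_cons_self,
    List.idxOf_cons_ne _ huv, List.idxOf_cons_self]

section Contraction

variable {a b : α}

theorem perm_append_cons_cons (l r : List α) (a b : α) :
    (l ++ a :: b :: r).Perm (b :: (l ++ a :: r)) := by
  simpa using List.perm_middle (l₁ := l ++ [a]) (l₂ := r) (a := b)

theorem erase_append_cons_cons {l r : List α} (hb : b ∉ l ++ a :: r) :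
    (l ++ a :: b :: r).erase b = l ++ a :: r := by
  have hb' : b ∉ l ++ [a] := fun h => hb (by simp at h ⊢; tauto)
  simpa using List.erase_append_right (b :: r) hb'

theorem mem_arcsList_append_cons_cons_iff {l r : List α} {u v : α} (ha : u ≠ a) (hb : u ≠ b) :
    (u, v) ∈ arcsList (l ++ a :: b :: r) ↔ (u, v) ∈ arcsList (l ++ a :: r) := by
  rw [arcsList_append_cons l a r, arcsList_append_cons l a (b :: r), Set.mem_union,
    Set.mem_union, mem_arcsList_cons_of_ne ha, mem_arcsList_cons_of_ne ha,
    mem_arcsList_cons_of_ne hb]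

theorem subset_arcsList_append_cons_cons_iff {F : Finset (α × α)} {l r : List α}
    (hab : (a, b) ∈ F) (hF : ∀ p ∈ F.erase (a, b), p.1 ≠ a ∧ p.1 ≠ b) :
    ↑F ⊆ arcsList (l ++ a :: b :: r) ↔ ↑(F.erase (a, b)) ⊆ arcsList (l ++ a :: r) := by
  conv_lhs => rw [← Finset.insert_erase hab]
  rw [Finset.coe_insert, Set.insert_subset_iff]
  simp only [Set.subset_def, Finset.mem_coe]
  rw [and_iff_right (mem_arcsList_iff.2 ⟨l, r, rfl⟩)]
  exact forall₂_congr fun p hp => mem_arcsList_append_cons_cons_iff (hF p hp).1 (hF p hp).2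

theorem forall_mem_append_cons_cons_iff {U : Finset α} {l r : List α} (hb : b ∈ U)
    (hb' : b ∉ l ++ a :: r) :
    (∀ x, x ∈ l ++ a :: b :: r ↔ x ∈ U) ↔ ∀ x, x ∈ l ++ a :: r ↔ x ∈ U.erase b := by
  simp only [(perm_append_cons_cons l r a b).mem_iff, List.mem_cons, Finset.mem_erase]
  constructor
  · intro h x
    by_cases hx : x = b
    · subst hx; simp [hb']
    · simp [← h x, hx]
  · intro h x
    by_cases hx : x = b
    · subst hx; simp [hb]
    · simp [h x, hx]

theorem isChain_append_cons_cons_iff {β : Type*} [Preorder β] {f : α → β} {l r : List α}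
    (hfab : f a = f b) :
    (l ++ a :: b :: r).IsChain (fun p q => f p ≤ f q) ↔
      (l ++ a :: r).IsChain (fun p q => f p ≤ f q) := by
  rw [List.isChain_append_cons_cons, List.isChain_split]
  rcases r with _ | ⟨c, r⟩ <;> simp [List.isChain_cons_cons, hfab]

end Contraction

theorem exists_mem_arcsList_of_mem_arcsList_flatten {r : α → α → Bool} {L : List (List α)}
    (hL : [] ∉ L) (hc : L.IsChain fun p q => ∃ hp hq, r (p.getLast hp) (q.head hq) = false)
    {u v : α} (h : (u, v) ∈ arcsList L.flatten) (huv : r u v = true) :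
    ∃ p ∈ L, (u, v) ∈ arcsList p := by
  induction L with
  | nil => simp at h
  | cons p L ih =>
    have hp : p ≠ [] := fun h => hL (h ▸ List.mem_cons_self)
    rw [List.flatten_cons, ← List.dropLast_append_getLast hp, List.append_assoc,
      List.singleton_append, arcsList_append_cons, Set.mem_union, mem_arcsList_cons_iff] at h
    rcases h with h | ⟨rfl, hv⟩ | h
    · exact ⟨_, List.mem_cons_self, by rwa [List.dropLast_append_getLast hp] at h⟩
    · rcases L with _ | ⟨q, L⟩
      · simp at hv
      obtain ⟨_, hq, hr⟩ := (List.isChain_cons_cons.1 hc).1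
      rw [List.flatten_cons, List.head?_append_of_ne_nil _ hq, List.head?_eq_some_head hq,
        Option.some_inj] at hv
      rw [← hv, hr] at huv
      exact absurd huv Bool.false_ne_true
    · obtain ⟨q, hq, h⟩ := ih (fun h => hL (List.mem_cons_of_mem _ h)) hc.tail h
      exact ⟨q, List.mem_cons_of_mem _ hq, h⟩

-- The path cover consists of the maximal runs of `w` along arcs of `F`.
theorem isLinear_of_subset_arcsList {F : Set (α × α)} {w : List α} (hw : w.Nodup)
    (hw' : ∀ x, x ∈ w) (hF : F ⊆ arcsList w) : IsLinear α F := by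
  set L := w.splitBy fun u v => decide ((u, v) ∈ F)
  have hL : L.flatten = w := List.flatten_splitBy _ w
  refine ⟨{p | p ∈ L}, ⟨fun p hp => ⟨List.ne_nil_of_mem_splitBy hp, ?_⟩, fun v => ?_⟩, ?_⟩
  · exact hw.sublist (hL ▸ List.infix_of_mem_flatten hp).sublist
  · obtain ⟨p, hp, hvp⟩ := List.mem_flatten.1 (hL ▸ hw' v)
    refine ⟨p, ⟨hp, hvp⟩, fun q ⟨hq, hvq⟩ => ?_⟩
    by_contra hne
    have : Std.Symm (List.Disjoint (α := α)) := ⟨fun _ _ h => h.symm⟩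
    exact (List.nodup_flatten.1 (hL ▸ hw)).2.forall hq hp hne hvq hvp
  · ext ⟨u, v⟩
    simp only [arcsCover, Set.mem_iUnion, Set.mem_ofPred_eq, exists_prop]
    constructor
    · intro h
      exact exists_mem_arcsList_of_mem_arcsList_flatten (List.nil_notMem_splitBy _ w)
        (List.isChain_getLast_head_splitBy _ w) (by rw [hL]; exact hF h) (by simpa using h)
    · rintro ⟨p, hp, h⟩
      simpa using isChain_iff_forall_mem_arcsList.1 (List.isChain_of_mem_splitBy hp) _ h

theorem exists_listing_of_isLinear [Finite α] {F : Set (α × α)} (h : IsLinear α F) :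
    ∃ w : List α, w.Nodup ∧ (∀ x, x ∈ w) ∧ F ⊆ arcsList w := by
  obtain ⟨C, ⟨hC, hcover⟩, rfl⟩ := h
  have : Fintype α := Fintype.ofFinite α
  have hfin : C.Finite := (List.finite_length_le α (Fintype.card α)).subset
    fun p hp => (hC p hp).2.length_le_card
  have hmem : ∀ p, p ∈ hfin.toFinset.toList ↔ p ∈ C := by simp
  refine ⟨hfin.toFinset.toList.flatten,
    List.nodup_flatten.2 ⟨fun p hp => (hC p ((hmem p).1 hp)).2, ?_⟩, fun x => ?_, ?_⟩
  · refine (Finset.nodup_toList _).pairwise_of_forall_ne fun p hp q hq hne x hxp hxq => hne ?_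
    obtain ⟨r, -, hr⟩ := hcover x
    exact (hr p ⟨(hmem p).1 hp, hxp⟩).trans (hr q ⟨(hmem q).1 hq, hxq⟩).symm
  · obtain ⟨p, ⟨hp, hxp⟩, -⟩ := hcover x
    exact List.mem_flatten.2 ⟨p, (hmem p).2 hp, hxp⟩
  · simp only [arcsCover, Set.iUnion_subset_iff]
    exact fun p hp => arcsList_subset_of_infix (List.infix_of_mem_flatten ((hmem p).2 hp))

theorem isLinear_iff_exists_listing [Finite α] {F : Set (α × α)} :
    IsLinear α F ↔ ∃ w : List α, w.Nodup ∧ (∀ x, x ∈ w) ∧ F ⊆ arcsList w :=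
  ⟨exists_listing_of_isLinear, fun ⟨_, hw, hw', hF⟩ => isLinear_of_subset_arcsList hw hw' hF⟩

theorem exists_perm_map_eq {l₁ l₂ : List α} (h : l₁.Perm l₂) (hn : l₁.Nodup) :
    ∃ σ : Equiv.Perm α, (∀ x ∉ l₁, σ x = x) ∧ l₁.map σ = l₂ := by
  induction h with
  | nil => exact ⟨1, fun _ _ => rfl, rfl⟩
  | cons x _ ih =>
    obtain ⟨σ, hfix, hmap⟩ := ih (List.nodup_cons.1 hn).2
    refine ⟨σ, fun y hy => hfix y (fun h => hy (List.mem_cons_of_mem x h)), ?_⟩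
    rw [List.map_cons, hmap, hfix x (List.nodup_cons.1 hn).1]
  | swap x y l =>
    simp only [List.nodup_cons, List.mem_cons, not_or] at hn
    refine ⟨Equiv.swap x y, fun z hz => ?_, ?_⟩
    · simp only [List.mem_cons, not_or] at hz
      exact Equiv.swap_apply_of_ne_of_ne hz.2.1 hz.1
    · rw [List.map_cons, List.map_cons, Equiv.swap_apply_left, Equiv.swap_apply_right]
      congr 2
      exact List.map_congr_left (fun z hz => Equiv.swap_apply_of_ne_of_ne
        (by rintro rfl; exact hn.2.1 hz) (by rintro rfl; exact hn.1.2 hz)) |>.trans (List.map_id l)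
  | trans h₁₂ _ ih₁₂ ih₂₃ =>
    obtain ⟨σ, hσ, hmap₁⟩ := ih₁₂ hn
    obtain ⟨τ, hτ, hmap₂⟩ := ih₂₃ (h₁₂.nodup_iff.1 hn)
    refine ⟨τ * σ, fun x hx => ?_, ?_⟩
    · rw [Equiv.Perm.mul_apply, hσ x hx, hτ x (fun h => hx (h₁₂.mem_iff.2 h))]
    · rw [← hmap₂, ← hmap₁, List.map_map]; rfl

theorem apply_mem_iff_of_forall_notMem {U : Finset α} {σ : Equiv.Perm α}
    (hσ : ∀ v ∉ U, σ v = v) (v : α) : σ v ∈ U ↔ v ∈ U := by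
  constructor
  · intro h
    by_contra hv
    exact hv (hσ v hv ▸ h)
  · intro hv
    by_contra h
    rw [σ.injective (hσ _ h)] at h
    exact h hv

theorem subset_apermSet_iff {F : Set (α × α)} {σ : Equiv.Perm α} :
    F ⊆ ApermSet σ ↔ ∀ p ∈ F, σ p.1 = p.2 := by
  constructor
  · rintro h p hp
    obtain ⟨x, hx⟩ := h hp
    rw [← hx]
  · exact fun h p hp => ⟨p.1, Prod.ext rfl (h p hp)⟩

theorem apply_eq_of_subset_apermSet {β : Type*} {f : α → β} {σ : Equiv.Perm α}
    {F : Set (α × α)} (hσ : f ∘ σ = f) (hF : F ⊆ ApermSet σ) : ∀ p ∈ F, f p.1 = f p.2 := by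
  intro p hp
  rw [← subset_apermSet_iff.1 hF p hp]
  exact (congrFun hσ p.1).symm

section Counting

variable {β : Type*} (f : α → β)

def levelPerms (U : Finset α) (F : Finset (α × α)) : Set (Equiv.Perm α) :=
  {σ | (∀ v ∉ U, σ v = v) ∧ f ∘ σ = f ∧ ↑F ⊆ ApermSet σ}

variable {a b : α}

theorem mul_swap_mem_levelPerms_iff {U : Finset α} {F : Finset (α × α)} {σ : Equiv.Perm α}
    (hab : (a, b) ∈ F) (hF : ∀ p ∈ F.erase (a, b), p.1 ≠ a ∧ p.1 ≠ b) (ha : a ∈ U) (hb : b ∈ U)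
    (hfab : f a = f b) :
    σ * Equiv.swap a b ∈ levelPerms f (U.erase b) (F.erase (a, b)) ↔ σ ∈ levelPerms f U F := by
  have hswap : ∀ v, v ≠ a → v ≠ b → Equiv.swap a b v = v := fun v => Equiv.swap_apply_of_ne_of_ne
  have hfix : (∀ v ∉ U.erase b, (σ * Equiv.swap a b) v = v) ↔ (∀ v ∉ U, σ v = v) ∧ σ a = b := by
    refine ⟨fun h => ⟨fun v hv => ?_, ?_⟩, fun ⟨h, hσa⟩ v hv => ?_⟩
    · have hva : v ≠ a := by rintro rfl; exact hv ha
      have hvb : v ≠ b := by rintro rfl; exact hv hb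
      simpa [hswap v hva hvb] using h v (fun h' => hv (Finset.mem_of_mem_erase h'))
    · simpa using h b (by simp)
    · by_cases hvb : v = b
      · simp [hvb, hσa]
      · have hvU : v ∉ U := fun h' => hv (Finset.mem_erase.2 ⟨hvb, h'⟩)
        have hva : v ≠ a := by rintro rfl; exact hvU ha
        simp [hswap v hva hvb, h v hvU]
  have hf : f ∘ ⇑(σ * Equiv.swap a b) = f ↔ f ∘ σ = f := by
    have hfs : ∀ v, f (Equiv.swap a b v) = f v := by
      intro v
      rcases eq_or_ne v a with rfl | hva
      · simp [hfab]
      rcases eq_or_ne v b with rfl | hvb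
      · simp [hfab]
      rw [hswap v hva hvb]
    simp only [funext_iff, Function.comp_apply, Equiv.Perm.mul_apply]
    constructor
    · intro h v
      simpa [hfs] using h (Equiv.swap a b v)
    · intro h v
      rw [h, hfs]
  have harcs : ↑(F.erase (a, b)) ⊆ ApermSet (σ * Equiv.swap a b) ↔
      ∀ p ∈ F.erase (a, b), σ p.1 = p.2 := by
    rw [subset_apermSet_iff]
    refine forall₂_congr fun p hp => ?_
    rw [Equiv.Perm.mul_apply, hswap p.1 (hF p hp).1 (hF p hp).2]
  have hF' : ↑F ⊆ ApermSet σ ↔ σ a = b ∧ ∀ p ∈ F.erase (a, b), σ p.1 = p.2 := by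
    conv_lhs => rw [← Finset.insert_erase hab]
    rw [subset_apermSet_iff, Finset.coe_insert, Set.forall_mem_insert]
    rfl
  simp only [levelPerms, Set.mem_ofPred_eq, hfix, hf, harcs, hF']
  tauto

theorem ncard_levelPerms_erase {U : Finset α} {F : Finset (α × α)}
    (hab : (a, b) ∈ F) (hF : ∀ p ∈ F.erase (a, b), p.1 ≠ a ∧ p.1 ≠ b) (ha : a ∈ U) (hb : b ∈ U)
    (hfab : f a = f b) :
    (levelPerms f U F).ncard = (levelPerms f (U.erase b) (F.erase (a, b))).ncard := by
  have key := fun σ => mul_swap_mem_levelPerms_iff f (σ := σ) hab hF ha hb hfab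
  refine Set.ncard_congr (fun σ _ => σ * Equiv.swap a b) (fun σ hσ => (key σ).2 hσ)
    (fun σ τ _ _ h => mul_right_cancel h) fun τ hτ => ⟨τ * Equiv.swap a b, ?_, ?_⟩
  · rw [← key, Equiv.mul_swap_mul_self]
    exact hτ
  · exact Equiv.mul_swap_mul_self a b τ

variable [LinearOrder β]

def sortedListings (U : Finset α) (F : Finset (α × α)) : Set (List α) :=
  {w | w.Nodup ∧ (∀ x, x ∈ w ↔ x ∈ U) ∧ w.IsChain (fun p q => f p ≤ f q) ∧ ↑F ⊆ arcsList w}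

theorem exists_mem_sortedListings_empty {U : Finset α} {w₀ : List α} (hw₀ : w₀.Nodup)
    (hU : ∀ x, x ∈ w₀ ↔ x ∈ U) : ∃ w, w ∈ sortedListings f U ∅ := by
  let r : α → α → Prop := fun p q => f p ≤ f q
  have : Std.Total r := ⟨fun p q => le_total (f p) (f q)⟩
  have : IsTrans α r := ⟨fun _ _ _ => le_trans⟩
  have hperm := List.perm_insertionSort r w₀
  exact ⟨w₀.insertionSort r, hperm.nodup_iff.2 hw₀, fun x => hperm.mem_iff.trans (hU x),
    List.isChain_iff_pairwise.2 (List.pairwise_insertionSort r w₀), by simp⟩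

-- `σ ↦ w₀.map σ` for a fixed sorted listing `w₀`.
theorem ncard_levelPerms_empty {U : Finset α} {w₀ : List α} (hw₀ : w₀.Nodup)
    (hU : ∀ x, x ∈ w₀ ↔ x ∈ U) :
    (levelPerms f U ∅).ncard = (sortedListings f U ∅).ncard := by
  obtain ⟨w₀, hn₀, hU₀, hs₀, -⟩ := exists_mem_sortedListings_empty f hw₀ hU
  refine Set.ncard_congr (fun σ _ => w₀.map σ) ?_ ?_ ?_
  · rintro σ ⟨hfix, hf, -⟩
    refine ⟨hn₀.map σ.injective, fun x => ?_, ?_, by simp⟩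
    · rw [← σ.apply_symm_apply x, List.mem_map_of_injective σ.injective, hU₀,
        apply_mem_iff_of_forall_notMem hfix]
    · have hfv : ∀ v, f (σ v) = f v := congrFun hf
      simpa only [List.isChain_map, hfv] using hs₀
  · rintro σ τ ⟨hσ, -⟩ ⟨hτ, -⟩ h
    ext v
    by_cases hv : v ∈ U
    · exact List.map_inj_left.1 h v ((hU₀ v).2 hv)
    · rw [hσ v hv, hτ v hv]
  · rintro w ⟨hn, hU', hs, -⟩
    have hperm : w₀.Perm w :=
      (List.perm_ext_iff_of_nodup hn₀ hn).2 fun x => (hU₀ x).trans (hU' x).symm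
    obtain ⟨σ, hfix, rfl⟩ := exists_perm_map_eq hperm hn₀
    have hfσ : w₀.map (f ∘ σ) = w₀.map f := by
      rw [← List.map_map]
      refine List.Perm.eq_of_pairwise' (r := (· ≤ ·)) ?_ ?_ (hperm.map f).symm
      · exact List.isChain_iff_pairwise.1 ((List.isChain_map f).2 hs)
      · exact List.isChain_iff_pairwise.1 ((List.isChain_map f).2 hs₀)
    refine ⟨σ, ⟨fun v hv => hfix v (fun h => hv ((hU₀ v).1 h)), ?_, by simp⟩, rfl⟩
    funext v
    by_cases hv : v ∈ w₀
    · exact List.map_inj_left.1 hfσ v hv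
    · exact congrArg f (hfix v hv)

theorem append_cons_cons_mem_sortedListings_iff {U : Finset α} {F : Finset (α × α)}
    {l r : List α} (hab : (a, b) ∈ F) (hF : ∀ p ∈ F.erase (a, b), p.1 ≠ a ∧ p.1 ≠ b)
    (hb : b ∈ U) (hb' : b ∉ l ++ a :: r) (hfab : f a = f b) :
    l ++ a :: b :: r ∈ sortedListings f U F ↔
      l ++ a :: r ∈ sortedListings f (U.erase b) (F.erase (a, b)) := by
  simp only [sortedListings, Set.mem_ofPred_eq, (perm_append_cons_cons l r a b).nodup_iff,
    List.nodup_cons, hb', not_false_eq_true, true_and, forall_mem_append_cons_cons_iff hb hb',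
    isChain_append_cons_cons_iff hfab, subset_arcsList_append_cons_cons_iff hab hF]

theorem ncard_sortedListings_erase {U : Finset α} {F : Finset (α × α)}
    (hab : (a, b) ∈ F) (hF : ∀ p ∈ F.erase (a, b), p.1 ≠ a ∧ p.1 ≠ b)
    (ha : a ∈ U.erase b) (hb : b ∈ U) (hfab : f a = f b) :
    (sortedListings f U F).ncard = (sortedListings f (U.erase b) (F.erase (a, b))).ncard := by
  have key := fun l r hb' => append_cons_cons_mem_sortedListings_iff f (l := l) (r := r)
    hab hF hb hb' hfab
  have decomp : ∀ w ∈ sortedListings f U F, ∃ l r, w = l ++ a :: b :: r ∧ b ∉ l ++ a :: r := by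
    rintro w ⟨hn, -, -, hw⟩
    obtain ⟨l, r, rfl⟩ := mem_arcsList_iff.1 (hw hab)
    exact ⟨l, r, rfl, (List.nodup_cons.1 ((perm_append_cons_cons l r a b).nodup_iff.1 hn)).1⟩
  refine Set.ncard_congr (fun w _ => w.erase b) ?_ ?_ ?_
  · intro w hw
    obtain ⟨l, r, rfl, hb'⟩ := decomp w hw
    rw [erase_append_cons_cons hb', ← key l r hb']
    exact hw
  · intro w₁ w₂ hw₁ hw₂ h
    obtain ⟨l₁, r₁, rfl, hb₁⟩ := decomp w₁ hw₁
    obtain ⟨l₂, r₂, rfl, hb₂⟩ := decomp w₂ hw₂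
    rw [erase_append_cons_cons hb₁, erase_append_cons_cons hb₂] at h
    have ha₁ := List.nodup_middle.1 ((key l₁ r₁ hb₁).1 hw₁).1
    rw [List.nodup_cons, List.mem_append, not_or] at ha₁
    obtain ⟨rfl, -, rfl⟩ := (List.append_cons_inj_of_notMem ha₁.1.1 ha₁.1.2).1 h
    rfl
  · intro w' hw'
    obtain ⟨l, r, rfl⟩ := List.append_of_mem ((hw'.2.1 a).2 ha)
    have hb' : b ∉ l ++ a :: r := fun h => (Finset.mem_erase.1 ((hw'.2.1 b).1 h)).1 rfl
    exact ⟨l ++ a :: b :: r, (key l r hb').2 hw', erase_append_cons_cons hb'⟩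

theorem ncard_levelPerms_eq_ncard_sortedListings {U : Finset α} {F : Finset (α × α)}
    {w₀ : List α} (hw₀ : w₀.Nodup) (hU : ∀ x, x ∈ w₀ ↔ x ∈ U) (hF : ↑F ⊆ arcsList w₀)
    (hf : ∀ p ∈ F, f p.1 = f p.2) :
    (levelPerms f U F).ncard = (sortedListings f U F).ncard := by
  induction F using Finset.strongInduction generalizing U w₀ with
  | H F ih =>
  rcases F.eq_empty_or_nonempty with rfl | hne
  · exact ncard_levelPerms_empty f hw₀ hU
  -- The arc of `F` ending furthest right in `w₀` ends a path: no arc of `F` leaves `b`.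
  obtain ⟨⟨a, b⟩, hab, hmax⟩ := F.exists_max_image (fun p => w₀.idxOf p.2) hne
  have hsucc : ∀ p ∈ F, w₀.idxOf p.2 = w₀.idxOf p.1 + 1 :=
    fun p hp => idxOf_eq_add_one_of_mem_arcsList hw₀ (hF hp)
  have hsrc : ∀ p ∈ F.erase (a, b), p.1 ≠ a ∧ p.1 ≠ b := by
    rintro ⟨u, v⟩ hp
    obtain ⟨hne, hpF⟩ := Finset.mem_erase.1 hp
    refine ⟨?_, ?_⟩
    · rintro rfl
      have hv : v ∈ w₀ := List.mem_of_mem_tail (List.of_mem_zip (hF hpF)).2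
      exact hne (Prod.ext rfl ((List.idxOf_inj hv).1 ((hsucc _ hpF).trans (hsucc _ hab).symm)))
    · rintro rfl
      have h₁ : w₀.idxOf v ≤ w₀.idxOf u := hmax _ hpF
      have h₂ : w₀.idxOf v = w₀.idxOf u + 1 := hsucc _ hpF
      omega
  obtain ⟨l, r, rfl⟩ := mem_arcsList_iff.1 (hF hab)
  have hb' : b ∉ l ++ a :: r :=
    (List.nodup_cons.1 ((perm_append_cons_cons l r a b).nodup_iff.1 hw₀)).1
  have ha : a ∈ U.erase b :=
    Finset.mem_erase.2 ⟨fun h => hb' (by simp [h]), (hU a).1 (by simp)⟩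
  have hb : b ∈ U := (hU b).1 (by simp)
  rw [ncard_levelPerms_erase f hab hsrc (Finset.mem_of_mem_erase ha) hb (hf _ hab),
    ncard_sortedListings_erase f hab hsrc ha hb (hf _ hab)]
  exact ih _ (Finset.erase_ssubset hab)
    (List.nodup_cons.1 ((perm_append_cons_cons l r a b).nodup_iff.1 hw₀)).2
    ((forall_mem_append_cons_cons_iff hb hb').1 hU)
    ((subset_arcsList_append_cons_cons_iff hab hsrc).1 hF)
    fun p hp => hf p (Finset.mem_of_mem_erase hp)

-- Both sides are empty unless `F ⊆ A` is linear with `f` constant along its arcs.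
theorem ncard_perms_eq_ncard_listings [Fintype α] (A : Set (α × α)) (F : Finset (α × α)) :
    {σ : Equiv.Perm α | f ∘ σ = f ∧ ↑F ⊆ ApermSet σ ∩ A ∧ IsLinear α ↑F}.ncard =
      {w : List α | (w.Nodup ∧ (∀ x, x ∈ w) ∧ w.IsChain (fun p q => f p ≤ f q)) ∧
        ∀ p ∈ F, p ∈ arcsList w ∩ A ∧ f p.1 = f p.2}.ncard := by
  have hσ : ∀ σ : Equiv.Perm α, (f ∘ σ = f ∧ ↑F ⊆ ApermSet σ ∩ A ∧ IsLinear α ↑F) ↔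
      (↑F ⊆ A ∧ IsLinear α ↑F ∧ ∀ p ∈ F, f p.1 = f p.2) ∧ σ ∈ levelPerms f Finset.univ F := by
    intro σ
    simp only [levelPerms, Set.subset_inter_iff, Finset.mem_univ, not_true_eq_false,
      IsEmpty.forall_iff, implies_true, true_and, Set.mem_ofPred_eq]
    constructor
    · rintro ⟨hσ, ⟨hF, hA⟩, hlin⟩
      exact ⟨⟨hA, hlin, apply_eq_of_subset_apermSet hσ hF⟩, hσ, hF⟩
    · rintro ⟨⟨hA, hlin, -⟩, hσ, hF⟩
      exact ⟨hσ, ⟨hF, hA⟩, hlin⟩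
  have hw : ∀ w : List α, ((w.Nodup ∧ (∀ x, x ∈ w) ∧ w.IsChain (fun p q => f p ≤ f q)) ∧
      ∀ p ∈ F, p ∈ arcsList w ∩ A ∧ f p.1 = f p.2) ↔
      (↑F ⊆ A ∧ IsLinear α ↑F ∧ ∀ p ∈ F, f p.1 = f p.2) ∧ w ∈ sortedListings f Finset.univ F := by
    intro w
    simp only [sortedListings, Finset.mem_univ, iff_true, Set.mem_ofPred_eq, Set.subset_def,
      Finset.mem_coe, Set.mem_inter_iff]
    constructor
    · rintro ⟨⟨hn, hw, hs⟩, hF⟩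
      exact ⟨⟨fun p hp => (hF p hp).1.2,
        isLinear_iff_exists_listing.2 ⟨w, hn, hw, fun p hp => (hF p hp).1.1⟩,
        fun p hp => (hF p hp).2⟩, hn, hw, hs, fun p hp => (hF p hp).1.1⟩
    · rintro ⟨⟨hA, -, hf⟩, hn, hw, hs, hF⟩
      exact ⟨⟨hn, hw, hs⟩, fun p hp => ⟨⟨hF p hp, hA p hp⟩, hf p hp⟩⟩
  simp only [hσ, hw]
  by_cases hP : ↑F ⊆ A ∧ IsLinear α ↑F ∧ ∀ p ∈ F, f p.1 = f p.2
  · obtain ⟨w₀, hw₀, hw₀', hF⟩ := isLinear_iff_exists_listing.1 hP.2.1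
    simpa only [eq_true hP, true_and, Set.ofPred_mem_eq] using
      ncard_levelPerms_eq_ncard_sortedListings f (U := Finset.univ) hw₀ (by simpa using hw₀') hF
        hP.2.2
  · simp only [eq_false hP, false_and, Set.ofPred_false, Set.ncard_empty]

end Counting

theorem finite_setOf_nodup [Fintype α] : {w : List α | w.Nodup}.Finite :=
  (List.finite_length_le α (Fintype.card α)).subset fun _ hw => List.Nodup.length_le_card hw

theorem isChain_friendly_iff {β : Type*} [PartialOrder β] {f : α → β} {A : Set (α × α)}
    {w : List α} :
    w.IsChain (fun a b => f a ≤ f b ∧ ((a, b) ∈ A → f a < f b)) ↔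
      w.IsChain (fun a b => f a ≤ f b) ∧ ∀ p ∈ arcsList w, p ∈ A → ¬ f p.1 = f p.2 := by
  simp only [isChain_iff_forall_mem_arcsList, ← forall_and, Prod.mk.eta]
  exact forall₂_congr fun p _ => and_congr_right fun h => imp_congr_right fun _ => h.lt_iff_ne

open Finset in
theorem card_filter_eq_empty_eq_sum {ι γ : Type*} [Fintype γ] [DecidableEq γ] (s : Finset ι)
    (B : ι → Finset γ) :
    (#{i ∈ s | B i = ∅} : ℤ) = ∑ F : Finset γ, (-1 : ℤ) ^ #F * #{i ∈ s | F ⊆ B i} := by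
  calc (#{i ∈ s | B i = ∅} : ℤ) = ∑ i ∈ s, ∑ F ∈ (B i).powerset, (-1 : ℤ) ^ #F := by
        rw [card_filter, Nat.cast_sum]
        exact sum_congr rfl fun i _ => by rw [sum_powerset_neg_one_pow_card]; split_ifs <;> rfl
    _ = ∑ F : Finset γ, ∑ i ∈ s with F ⊆ B i, (-1 : ℤ) ^ #F :=
        sum_comm' fun i F => by simp [and_comm]
    _ = _ := by simp [mul_comm]

end FriendlyListing

/-- **Lemma (counting (f,D)-friendly listings).** For `f : V → ℙ`,
`∑_{σ : f∘σ = f} ∑_{F ⊆ A_σ ∩ A linear} (-1)^{|F|}` equals the number of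
`(f, D)`-friendly `V`-listings, i.e. the `V`-listings `(v_1, …, v_n)` with
`f(v_1) ≤ ⋯ ≤ f(v_n)` and `f(v_p) < f(v_{p+1})` whenever `(v_p, v_{p+1}) ∈ A`. -/
theorem friendly_listings_count (V : Type) [Fintype V] [DecidableEq V]
    (A : Set (V × V)) (f : V → ℕ+) :
    ∑ σ ∈ Finset.univ.filter (fun σ : Equiv.Perm V => f ∘ ⇑σ = f),
      ∑ F ∈ Finset.univ.filter
          (fun F : Finset (V × V) =>
            (↑F : Set (V × V)) ⊆ ApermSet σ ∩ A ∧ IsLinear V (↑F : Set (V × V))),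
        (-1 : ℤ) ^ F.card
      = (Set.ncard {w : List V | w.Nodup ∧ (∀ x : V, x ∈ w) ∧
          w.Chain' fun a b => f a ≤ f b ∧ ((a, b) ∈ A → f a < f b)} : ℤ) := by
  have hfin : {w : List V | w.Nodup ∧ (∀ x, x ∈ w) ∧ w.IsChain fun a b => f a ≤ f b}.Finite :=
    FriendlyListing.finite_setOf_nodup.subset fun _ hw => hw.1
  let bad : List V → Finset (V × V) := fun w => {p | p ∈ arcsList w ∩ A ∧ f p.1 = f p.2}
  have hfriendly : {w : List V | w.Nodup ∧ (∀ x, x ∈ w) ∧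
      w.Chain' fun a b => f a ≤ f b ∧ ((a, b) ∈ A → f a < f b)} =
      ↑(hfin.toFinset.filter fun w => bad w = ∅) := by
    ext w
    simp only [Set.mem_ofPred_eq, Finset.coe_filter, Set.Finite.mem_toFinset, bad,
      Finset.filter_eq_empty_iff]
    refine (and_congr_right' (and_congr_right' FriendlyListing.isChain_friendly_iff)).trans ?_
    simp only [Finset.mem_univ, true_implies, Set.mem_inter_iff, not_and, and_assoc]
  rw [hfriendly, Set.ncard_coe_finset, FriendlyListing.card_filter_eq_empty_eq_sum]
  refine (Finset.sum_comm' (f := fun _ (F : Finset (V × V)) => (-1 : ℤ) ^ F.card)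
    (t' := Finset.univ) (s' := fun F : Finset (V × V) => Finset.univ.filter
      fun σ : Equiv.Perm V => f ∘ σ = f ∧ ↑F ⊆ ApermSet σ ∩ A ∧ IsLinear V ↑F)
    fun σ F => by simp).trans (Finset.sum_congr rfl fun F _ => ?_)
  rw [Finset.sum_const, nsmul_eq_mul, mul_comm]
  congr 2
  rw [← Set.ncard_coe_finset, ← Set.ncard_coe_finset, Finset.coe_filter, Finset.coe_filter]
  simpa [bad, Finset.subset_iff] using FriendlyListing.ncard_perms_eq_ncard_listings f A F
end
end

section
/- Let V be a finite set and σ a permutation of V. Then, as formal power series in countably many variables x_1, x_2, x_3, … over ℤ, ∑_f ∏_{v ∈ V} x_{f(v)} = p_{type(σ)}, where the sum ranges over all maps f: V → ℙ (the positive integers) satisfying f∘σ = f. -/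
open scoped Classical

noncomputable section

/-!
A map `f : V → ℙ` with `f ∘ σ = f` is constant on every cycle of `σ`, so it is the same as a
function `g` from the cycles to `ℙ`, and its monomial is `∏_γ x_{g(γ)}^{ℓ(γ)}`. Expanding
`p_{type σ} = ∏_γ (x_1^{ℓ(γ)} + x_2^{ℓ(γ)} + ⋯)` produces each such monomial exactly once,
as `g` ranges over all choices of one variable per cycle.
-/

theorem coeff_prod_pSumR {R : Type} [CommRing R] {ι : Type*} [Fintype ι] [DecidableEq ι]
    (k : ι → ℕ) (hk : ∀ i, k i ≠ 0) (d : ℕ+ →₀ ℕ) :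
    MvPowerSeries.coeff d (∏ i, pSumR R (k i)) =
      Set.ncard {g : ι → ℕ+ | ∑ i, Finsupp.single (g i) (k i) = d} := by
  let P : (ι →₀ ℕ+ →₀ ℕ) → Prop := fun l => ∀ i, ∃ a, l i = Finsupp.single a (k i)
  let toFinsupp (g : ι → ℕ+) : ι →₀ ℕ+ →₀ ℕ :=
    Finsupp.equivFunOnFinite.symm fun i => Finsupp.single (g i) (k i)
  have toFinsupp_injective : Function.Injective toFinsupp := fun g g' h => funext fun i =>
    (Finsupp.single_left_inj (hk i)).1 (DFunLike.congr_fun h i)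
  have image_eq : toFinsupp '' {g | ∑ i, Finsupp.single (g i) (k i) = d} =
      ↑((Finset.finsuppAntidiag Finset.univ d).filter P) := by
    ext l
    simp only [Set.mem_image, Set.mem_ofPred_eq, Finset.coe_filter, Finset.mem_finsuppAntidiag,
      Finset.subset_univ, and_true]
    constructor
    · rintro ⟨g, rfl, rfl⟩
      exact ⟨by simp [toFinsupp], fun i => ⟨g i, rfl⟩⟩
    · rintro ⟨rfl, hl⟩
      choose g hg using hl
      exact ⟨g, by simp [hg], Finsupp.ext hg |>.symm⟩
  rw [MvPowerSeries.coeff_prod, ← Set.ncard_image_of_injective _ toFinsupp_injective, image_eq,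
    Set.ncard_coe_finset, ← Finset.sum_boole]
  exact Finset.sum_congr rfl fun l _ => Fintype.prod_boole

theorem Equiv.Perm.SameCycle.apply_eq_of_comp_eq {α β : Type*} [Finite α] {σ : Equiv.Perm α}
    {f : α → β} (hf : f ∘ σ = f) {u v : α} (h : σ.SameCycle u v) : f u = f v := by
  obtain ⟨i, -, rfl⟩ := h.exists_pow_eq'
  rw [Equiv.Perm.coe_pow]
  exact (congrFun (Function.iterate_invariant hf i) u).symm

section Cycles

variable {V : Type} [Fintype V] [DecidableEq V] {σ : Equiv.Perm V}

variable (σ) in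
def toCycle (v : V) : cyclesOf σ :=
  ⟨Finset.univ.filter (σ.SameCycle v), Finset.mem_image_of_mem _ (Finset.mem_univ v)⟩

theorem mem_toCycle {u v : V} : u ∈ (toCycle σ v : Finset V) ↔ σ.SameCycle v u := by
  simp [toCycle]

theorem toCycle_eq_toCycle_iff {u v : V} : toCycle σ u = toCycle σ v ↔ σ.SameCycle u v := by
  refine ⟨fun h => mem_toCycle.1 (h ▸ mem_toCycle.2 (.refl σ v)), fun h => ?_⟩
  ext w
  simp only [mem_toCycle]
  exact ⟨h.symm.trans, h.trans⟩

theorem toCycle_surjective : Function.Surjective (toCycle σ) := by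
  rintro ⟨O, hO⟩
  obtain ⟨v, -, rfl⟩ := Finset.mem_image.1 hO
  exact ⟨v, rfl⟩

theorem toCycle_apply (v : V) : toCycle σ (σ v) = toCycle σ v :=
  toCycle_eq_toCycle_iff.2 (Equiv.Perm.sameCycle_apply_left.2 (.refl σ v))

theorem filter_toCycle_eq (O : cyclesOf σ) :
    Finset.univ.filter (fun v => toCycle σ v = O) = O := by
  obtain ⟨w, rfl⟩ := toCycle_surjective O
  ext v
  simp only [Finset.mem_filter, Finset.mem_univ, true_and, mem_toCycle, toCycle_eq_toCycle_iff]
  exact ⟨Equiv.Perm.SameCycle.symm, Equiv.Perm.SameCycle.symm⟩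

theorem cycle_card_pos (O : cyclesOf σ) : 0 < (O : Finset V).card := by
  obtain ⟨w, rfl⟩ := toCycle_surjective O
  exact Finset.card_pos.2 ⟨w, mem_toCycle.2 (.refl σ w)⟩

theorem sum_comp_toCycle {M : Type*} [AddCommMonoid M] (g : cyclesOf σ → M) :
    ∑ v, g (toCycle σ v) = ∑ O : cyclesOf σ, (O : Finset V).card • g O := by
  rw [Finset.sum_comp, Finset.image_univ_of_surjective toCycle_surjective]
  simp only [filter_toCycle_eq]

theorem range_comp_toCycle (α : Type*) :
    Set.range (fun g : cyclesOf σ → α => g ∘ toCycle σ) = {f | f ∘ σ = f} := by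
  ext f
  constructor
  · rintro ⟨g, rfl⟩
    exact funext fun v => congrArg g (toCycle_apply v)
  · intro hf
    refine ⟨f ∘ Function.surjInv toCycle_surjective, funext fun v => ?_⟩
    exact Equiv.Perm.SameCycle.apply_eq_of_comp_eq hf
      (toCycle_eq_toCycle_iff.1 (Function.surjInv_eq toCycle_surjective _))

theorem sum_single_comp_toCycle (g : cyclesOf σ → ℕ+) :
    ∑ v, Finsupp.single (g (toCycle σ v)) 1 =
      ∑ O : cyclesOf σ, Finsupp.single (g O) (O : Finset V).card := by
  rw [sum_comp_toCycle fun O => Finsupp.single (g O) 1]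
  simp only [Finsupp.smul_single, smul_eq_mul, mul_one]

end Cycles

/-- **Lemma (Pólya counting).** `∑_f ∏_{v ∈ V} x_{f(v)} = p_{type σ}`, summed over all
maps `f : V → ℙ` with `f ∘ σ = f`. The left-hand side is the power series whose
coefficient at a monomial `d` is the number of such maps `f` whose associated monomial
`∏_{v} x_{f(v)}` equals `d`. -/
theorem sum_fixed_maps_eq_pType (V : Type) [Fintype V] [DecidableEq V]
    (σ : Equiv.Perm V) :
    ((fun d =>
        ((Set.ncard {f : V → ℕ+ |
            f ∘ ⇑σ = f ∧ (∑ v : V, Finsupp.single (f v) 1) = d}) : ℤ)) :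
      MvPowerSeries ℕ+ ℤ)
      = pType σ := by
  refine MvPowerSeries.ext fun d => ?_
  have fixed_maps : {f : V → ℕ+ | f ∘ σ = f ∧ ∑ v, Finsupp.single (f v) 1 = d} =
      (· ∘ toCycle σ) '' {g | ∑ O : cyclesOf σ, Finsupp.single (g O) (O : Finset V).card = d} := by
    ext f
    have invariant_iff := Set.ext_iff.1 (range_comp_toCycle (σ := σ) ℕ+) f
    constructor
    · rintro ⟨hf, hd⟩
      obtain ⟨g, rfl⟩ := invariant_iff.2 hf
      exact ⟨g, (sum_single_comp_toCycle g).symm.trans hd, rfl⟩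
    · rintro ⟨g, hg, rfl⟩
      exact ⟨invariant_iff.1 ⟨g, rfl⟩, (sum_single_comp_toCycle g).trans hg⟩
  rw [pType, ← Finset.prod_coe_sort]
  unfold pSum
  rw [coeff_prod_pSumR _ fun O => (cycle_card_pos O).ne',
    ← Set.ncard_image_of_injective _ toCycle_surjective.injective_comp_right, ← fixed_maps]
  rfl
end
end

section
/- Let D=(V,A) be a digraph and σ a permutation of V. Set φ(σ) := ∑ (ℓ(γ)−1), summed over those cycles γ of σ that are D-cycles. Then ∑_F (−1)^{|F|}, summed over all linear subsets F of A_σ ∩ A, equals (−1)^{φ(σ)} if σ ∈ S_V(D,D̄), and equals 0 otherwise. -/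
open scoped Classical

noncomputable section

/-!
A subset of `A_σ` is `{(v, σ v) : v ∈ S}` for a unique `S ⊆ V`, and it is linear iff `S` contains
no cycle of `σ`: arcs of a path cover raise the position in the path by one, which is impossible
all the way around a cycle; conversely, the maximal `σ`-runs through `S` form a path cover with
exactly these arcs. The signed sum over such `S` then factors over the cycles `γ` of `σ`. The
factor of `γ` is the signed sum over the proper subsets of `γ` all of whose arcs lie in `A`, which
is `(-1)^(ℓ(γ)-1)` if `γ` is a `D`-cycle, `1` if it is a `D̄`-cycle, and `0` otherwise.
-/

namespace Finset

variable {α β : Type*} [DecidableEq α]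

theorem sum_powerset_union_of_disjoint [AddCommMonoid β] {s t : Finset α} (hst : Disjoint s t)
    (g : Finset α → β) :
    ∑ u ∈ (s ∪ t).powerset, g u = ∑ a ∈ s.powerset, ∑ b ∈ t.powerset, g (a ∪ b) := by
  have hsplit : ∀ u ∈ (s ∪ t).powerset, u ∩ s ∪ u ∩ t = u := fun u hu => by
    rw [← inter_union_distrib_left, inter_eq_left.2 (mem_powerset.1 hu)]
  rw [← sum_product']
  refine sum_nbij' (fun u => (u ∩ s, u ∩ t)) (fun p => p.1 ∪ p.2) (fun u _ => by simp) ?_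
    hsplit ?_ fun u hu => by rw [hsplit u hu]
  · rintro ⟨a, b⟩ h
    simp only [mem_product, mem_powerset] at h ⊢
    exact union_subset_union h.1 h.2
  · rintro ⟨a, b⟩ h
    simp only [mem_product, mem_powerset] at h
    have hbs : b ∩ s = ∅ := disjoint_iff_inter_eq_empty.1 (hst.symm.mono_left h.2)
    have hat : a ∩ t = ∅ := disjoint_iff_inter_eq_empty.1 (hst.mono_left h.1)
    simp [union_inter_distrib_right, hbs, hat, inter_eq_left.2 h.1, inter_eq_left.2 h.2]

theorem sum_powerset_biUnion_filter_eq_prod [CommSemiring β] (𝒪 : Finset (Finset α))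
    (h𝒪 : (𝒪 : Set (Finset α)).PairwiseDisjoint id) (P : Finset α → Finset α → Prop)
    [∀ O, DecidablePred (P O)] (f : α → β) :
    ∑ S ∈ (𝒪.biUnion id).powerset with ∀ O ∈ 𝒪, P O (S ∩ O), ∏ a ∈ S, f a =
      ∏ O ∈ 𝒪, ∑ S ∈ O.powerset with P O S, ∏ a ∈ S, f a := by
  induction 𝒪 using Finset.induction_on with
  | empty => simp
  | insert O 𝒪 hO ih =>
    have h𝒪' : (𝒪 : Set (Finset α)).PairwiseDisjoint id := h𝒪.subset (by simp)
    have hdisj : ∀ O' ∈ 𝒪, Disjoint O O' := fun O' hO' =>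
      h𝒪 (by simp) (by simp [hO']) (ne_of_mem_of_not_mem hO' hO).symm
    have hdisjU : Disjoint O (𝒪.biUnion id) := (disjoint_biUnion_right _ _ _).2 hdisj
    rw [prod_insert hO, ← ih h𝒪', biUnion_insert, id, sum_filter,
      sum_powerset_union_of_disjoint hdisjU, sum_filter, sum_filter, sum_mul_sum]
    refine sum_congr rfl fun a ha => ?_
    refine sum_congr rfl fun b hb => ?_
    rw [mem_powerset] at ha hb
    have hab : Disjoint a b := hdisjU.mono ha hb
    have hO_inter : (a ∪ b) ∩ O = a := by
      rw [union_inter_distrib_right, inter_eq_left.2 ha,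
        disjoint_iff_inter_eq_empty.1 (hdisjU.symm.mono_left hb),
        union_empty]
    have h𝒪_inter : ∀ O' ∈ 𝒪, (a ∪ b) ∩ O' = b ∩ O' := fun O' hO' => by
      rw [union_inter_distrib_right,
        disjoint_iff_inter_eq_empty.1 ((hdisj O' hO').mono_left ha), empty_union]
    have hcond : (∀ O' ∈ insert O 𝒪, P O' ((a ∪ b) ∩ O')) ↔
        P O a ∧ ∀ O' ∈ 𝒪, P O' (b ∩ O') := by
      simp +contextual only [forall_mem_insert, hO_inter, h𝒪_inter]
    rw [if_congr hcond rfl rfl, prod_union hab, ite_zero_mul_ite_zero]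

theorem sum_neg_one_pow_card_filter_ne {O : Finset α} (hO : O.Nonempty)
    (p : α → Prop) [DecidablePred p] :
    ∑ S ∈ O.powerset with (∀ a ∈ S, p a) ∧ S ≠ O, (-1 : ℤ) ^ S.card =
      if ∀ a ∈ O, p a then (-1) ^ (O.card - 1) else if ∀ a ∈ O, ¬ p a then 1 else 0 := by
  by_cases hp : ∀ a ∈ O, p a
  · have hfilter : {S ∈ O.powerset | (∀ a ∈ S, p a) ∧ S ≠ O} = O.powerset.erase O := by
      ext S
      simp only [mem_filter, mem_powerset, mem_erase]
      exact ⟨fun h => ⟨h.2.2, h.1⟩, fun h => ⟨h.2, fun a ha => hp a (h.2 ha), h.1⟩⟩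
    rw [if_pos hp, hfilter, sum_erase_eq_sub (mem_powerset_self O),
      sum_powerset_neg_one_pow_card, if_neg hO.ne_empty, zero_sub, neg_eq_iff_eq_neg,
      ← neg_one_mul (_ ^ _), ← pow_succ', Nat.sub_add_cancel hO.card_pos]
  · have hfilter : {S ∈ O.powerset | (∀ a ∈ S, p a) ∧ S ≠ O} = (O.filter p).powerset := by
      ext S
      simp only [mem_filter, mem_powerset, subset_iff]
      refine ⟨fun h a ha => ⟨h.1 ha, h.2.1 a ha⟩, fun h => ⟨fun a ha => (h ha).1,
        fun a ha => (h ha).2, ?_⟩⟩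
      rintro rfl
      exact hp fun a ha => (h ha).2
    rw [if_neg hp, hfilter, sum_powerset_neg_one_pow_card]
    simp only [filter_eq_empty_iff]

theorem prod_ite_ite_one_zero {ι M : Type*} [CommMonoidWithZero M] (s : Finset ι)
    (p q : ι → Prop) [DecidablePred p] [DecidablePred q] (f : ι → M) :
    ∏ i ∈ s, (if p i then f i else if q i then 1 else 0) =
      if ∀ i ∈ s, p i ∨ q i then ∏ i ∈ s with p i, f i else 0 := by
  split_ifs with h
  · rw [prod_filter]
    refine prod_congr rfl fun i hi => ?_
    by_cases hpi : p i
    · simp [hpi]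
    · simp [hpi, (h i hi).resolve_left hpi]
  · obtain ⟨i, hi, hpi, hqi⟩ : ∃ i ∈ s, ¬ p i ∧ ¬ q i := by simpa [not_or] using h
    exact prod_eq_zero hi (by simp [hpi, hqi])

end Finset

def Equiv.Perm.graphEmbedding {V : Type*} (σ : Equiv.Perm V) : V ↪ V × V :=
  ⟨fun v => (v, σ v), fun _ _ h => congrArg Prod.fst h⟩

@[simp]
theorem Equiv.Perm.graphEmbedding_apply {V : Type*} (σ : Equiv.Perm V) (v : V) :
    σ.graphEmbedding v = (v, σ v) :=
  rfl

section Linear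

variable {V : Type}

theorem mem_arcsList {l : List V} {a b : V} :
    (a, b) ∈ arcsList l ↔ ∃ i, ∃ h : i + 1 < l.length, l[i] = a ∧ l[i + 1] = b := by
  simp only [arcsList, Set.mem_ofPred_eq, List.mem_iff_getElem, List.length_zip,
    List.length_tail, List.getElem_zip, List.getElem_tail, Prod.mk.injEq]
  exact ⟨fun ⟨i, hi, h⟩ => ⟨i, by omega, h⟩, fun ⟨i, hi, h⟩ => ⟨i, by omega, h⟩⟩

theorem mem_arcsList_map_range {f : ℕ → V} {n : ℕ} {a b : V} :
    (a, b) ∈ arcsList ((List.range (n + 1)).map f) ↔ ∃ k < n, f k = a ∧ f (k + 1) = b := by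
  simp only [mem_arcsList, List.length_map, List.length_range, List.getElem_map,
    List.getElem_range]
  exact ⟨fun ⟨k, hk, h⟩ => ⟨k, by omega, h⟩, fun ⟨k, hk, h⟩ => ⟨k, by omega, h⟩⟩

theorem IsLinear.exists_grading {F : Set (V × V)} (hF : IsLinear V F) :
    ∃ pos : V → ℕ, ∀ a b, (a, b) ∈ F → pos b = pos a + 1 := by
  obtain ⟨C, ⟨hpaths, hcover⟩, rfl⟩ := hF
  choose path _ hunique using hcover
  refine ⟨fun v => (path v).idxOf v, fun a b hab => ?_⟩
  simp only [arcsCover, Set.mem_iUnion] at hab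
  obtain ⟨q, hq, hab⟩ := hab
  obtain ⟨i, hi, rfl, rfl⟩ := mem_arcsList.1 hab
  have hnd := (hpaths q hq).2
  dsimp only
  rw [← hunique _ q ⟨hq, List.getElem_mem _⟩, ← hunique _ q ⟨hq, List.getElem_mem _⟩,
    hnd.idxOf_getElem, hnd.idxOf_getElem]

variable {σ : Equiv.Perm V} {S : Set V}

theorem exists_pow_apply_notMem_of_isLinear [Finite V]
    (hS : IsLinear V (σ.graphEmbedding '' S)) (v : V) : ∃ k : ℕ, (σ ^ k) v ∉ S := by
  obtain ⟨pos, hpos⟩ := hS.exists_grading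
  by_contra! h
  have hk : ∀ k : ℕ, pos ((σ ^ k) v) = pos v + k := by
    intro k
    induction k with
    | zero => simp
    | succ k ih =>
      rw [pow_succ', Equiv.Perm.mul_apply, hpos _ _ ⟨_, h k, rfl⟩, ih, add_assoc]
  have hcycle := hk (orderOf σ)
  rw [pow_orderOf_eq_one, Equiv.Perm.one_apply] at hcycle
  exact (orderOf_pos σ).ne' (by omega)

theorem eq_of_pow_apply_eq_of_inv_apply_notMem {w w' : V} {i j : ℕ} (hw : σ⁻¹ w ∉ S)
    (hw' : σ⁻¹ w' ∉ S) (hi : ∀ k < i, (σ ^ k) w ∈ S) (hj : ∀ k < j, (σ ^ k) w' ∈ S)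
    (h : (σ ^ i) w = (σ ^ j) w') : i = j ∧ w = w' := by
  wlog hij : i ≤ j generalizing i j w w'
  · obtain ⟨h1, h2⟩ := this hw' hw hj hi h.symm (by omega)
    exact ⟨h1.symm, h2.symm⟩
  obtain ⟨d, rfl⟩ := Nat.exists_eq_add_of_le hij
  have hwd : w = (σ ^ d) w' := by
    rw [pow_add, Equiv.Perm.mul_apply] at h
    exact (σ ^ i).injective h
  cases d with
  | zero => simpa using hwd
  | succ d =>
    refine absurd (hj d (by omega)) ?_
    rwa [hwd, pow_succ', Equiv.Perm.mul_apply, Equiv.Perm.coe_inv, Equiv.symm_apply_apply] at hw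

theorem exists_inv_apply_notMem_pow_apply_eq [Finite V] (h : ∀ v, ∃ k : ℕ, (σ ^ k) v ∉ S)
    (v : V) : ∃ w j, σ⁻¹ w ∉ S ∧ (∀ k < j, (σ ^ k) w ∈ S) ∧ (σ ^ j) w = v := by
  have hex : ∃ j w, σ⁻¹ w ∉ S ∧ (σ ^ j) w = v := by
    obtain ⟨k, hk⟩ := h v
    have hcycle : σ.SameCycle ((σ ^ (k + 1)) v) v :=
      Equiv.Perm.sameCycle_pow_left.2 (Equiv.Perm.SameCycle.refl σ v)
    obtain ⟨j, -, hj⟩ := hcycle.exists_pow_eq'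
    refine ⟨j, (σ ^ (k + 1)) v, ?_, hj⟩
    rwa [pow_succ', Equiv.Perm.mul_apply, Equiv.Perm.coe_inv, Equiv.symm_apply_apply]
  classical
  obtain ⟨w, hw, hjv⟩ := Nat.find_spec hex
  refine ⟨w, Nat.find hex, hw, fun k hk => ?_, hjv⟩
  by_contra hkS
  refine Nat.find_min hex (show Nat.find hex - (k + 1) < Nat.find hex by omega)
    ⟨(σ ^ (k + 1)) w, ?_, ?_⟩
  · rwa [pow_succ', Equiv.Perm.mul_apply, Equiv.Perm.coe_inv, Equiv.symm_apply_apply]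
  · rw [← Equiv.Perm.mul_apply, ← pow_add, Nat.sub_add_cancel hk, hjv]

theorem exists_first_pow_apply_notMem {w : V} (h : ∃ k : ℕ, (σ ^ k) w ∉ S) :
    ∃ n, (∀ k < n, (σ ^ k) w ∈ S) ∧ (σ ^ n) w ∉ S := by
  classical
  exact ⟨Nat.find h, fun k hk => not_not.1 (Nat.find_min h hk), Nat.find_spec h⟩

variable (σ S) in
/-- The maximal `σ`-runs through `S`: each starts at a point whose `σ`-predecessor is outside `S`
and ends at the first point outside `S`. -/
def maximalRuns : Set (List V) :=
  {p | ∃ w n, σ⁻¹ w ∉ S ∧ (∀ k < n, (σ ^ k) w ∈ S) ∧ (σ ^ n) w ∉ S ∧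
    p = (List.range (n + 1)).map fun k => (σ ^ k) w}

theorem isPathCover_maximalRuns [Finite V] (h : ∀ v, ∃ k : ℕ, (σ ^ k) v ∉ S) :
    IsPathCover V (maximalRuns σ S) := by
  refine ⟨?_, fun v => ?_⟩
  · rintro _ ⟨w, n, hw, hrun, -, rfl⟩
    refine ⟨by simp, List.Nodup.map_on (fun i hi j hj hij => ?_) List.nodup_range⟩
    simp only [List.mem_range] at hi hj
    exact (eq_of_pow_apply_eq_of_inv_apply_notMem hw hw (fun k hk => hrun k (by omega))
      (fun k hk => hrun k (by omega)) hij).1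
  · obtain ⟨w, j, hw, hj, rfl⟩ := exists_inv_apply_notMem_pow_apply_eq h v
    obtain ⟨n, hrun, hexit⟩ := exists_first_pow_apply_notMem (h w)
    have hjn : j ≤ n := not_lt.1 fun hnj => hexit (hj n hnj)
    refine ⟨_, ⟨⟨w, n, hw, hrun, hexit, rfl⟩,
      List.mem_map.2 ⟨j, List.mem_range.2 (by omega), rfl⟩⟩, ?_⟩
    rintro _ ⟨⟨w', n', hw', hrun', hexit', rfl⟩, hmem⟩
    obtain ⟨j', hj', hjj'⟩ := List.mem_map.1 hmem
    rw [List.mem_range] at hj'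
    obtain ⟨rfl, rfl⟩ := eq_of_pow_apply_eq_of_inv_apply_notMem hw' hw
      (fun k hk => hrun' k (by omega)) hj hjj'
    obtain rfl : n' = n := le_antisymm (not_lt.1 fun h => hexit (hrun' n h))
      (not_lt.1 fun h => hexit' (hrun n' h))
    rfl

theorem arcsCover_maximalRuns [Finite V] (h : ∀ v, ∃ k : ℕ, (σ ^ k) v ∉ S) :
    arcsCover (maximalRuns σ S) = σ.graphEmbedding '' S := by
  ext ⟨a, b⟩
  simp only [arcsCover, Set.mem_iUnion, Set.mem_image, Equiv.Perm.graphEmbedding_apply,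
    Prod.mk.injEq, exists_prop]
  constructor
  · rintro ⟨_, ⟨w, n, -, hrun, -, rfl⟩, hab⟩
    obtain ⟨k, hk, rfl, rfl⟩ := mem_arcsList_map_range.1 hab
    exact ⟨_, hrun k hk, rfl, by rw [pow_succ', Equiv.Perm.mul_apply]⟩
  · rintro ⟨a, ha, rfl, rfl⟩
    obtain ⟨p, ⟨⟨w, n, hw, hrun, hexit, rfl⟩, hap⟩, -⟩ := (isPathCover_maximalRuns h).2 a
    obtain ⟨j, hj, rfl⟩ := List.mem_map.1 hap
    have hjn : j < n := by
      rw [List.mem_range] at hj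
      exact lt_of_le_of_ne (by omega) (by rintro rfl; exact hexit ha)
    exact ⟨_, ⟨w, n, hw, hrun, hexit, rfl⟩,
      mem_arcsList_map_range.2 ⟨j, hjn, rfl, by rw [pow_succ', Equiv.Perm.mul_apply]⟩⟩

theorem isLinear_image_graphEmbedding_iff [Finite V] :
    IsLinear V (σ.graphEmbedding '' S) ↔ ∀ v, ∃ k : ℕ, (σ ^ k) v ∉ S :=
  ⟨exists_pow_apply_notMem_of_isLinear,
    fun h => ⟨_, isPathCover_maximalRuns h, (arcsCover_maximalRuns h).symm⟩⟩

end Linear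

section Cycles

variable {V : Type} [Fintype V] [DecidableEq V]

theorem cyclesOf_eq_parts (σ : Equiv.Perm V) :
    cyclesOf σ = (Finpartition.ofSetoid (Equiv.Perm.SameCycle.setoid σ)).parts := by
  simp only [cyclesOf, Finpartition.ofSetoid, Finpartition.ofSetSetoid_parts]
  congr!

theorem pairwiseDisjoint_cyclesOf (σ : Equiv.Perm V) :
    (cyclesOf σ : Set (Finset V)).PairwiseDisjoint id := by
  rw [cyclesOf_eq_parts]
  exact Finpartition.disjoint _

theorem biUnion_cyclesOf (σ : Equiv.Perm V) : (cyclesOf σ).biUnion id = Finset.univ := by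
  rw [cyclesOf_eq_parts]
  exact Finpartition.biUnion_parts _

theorem nonempty_of_mem_cyclesOf {σ : Equiv.Perm V} {O : Finset V} (hO : O ∈ cyclesOf σ) :
    O.Nonempty := by
  rw [cyclesOf_eq_parts] at hO
  exact Finpartition.nonempty_of_mem_parts _ hO

theorem forall_cyclesOf_forall_mem_inter_iff (σ : Equiv.Perm V) (S : Finset V) (p : V → Prop) :
    (∀ O ∈ cyclesOf σ, ∀ a ∈ S ∩ O, p a) ↔ ∀ a ∈ S, p a := by
  refine ⟨fun h a ha => ?_, fun h O _ a ha => h a (Finset.mem_inter.1 ha).1⟩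
  obtain ⟨O, hO, haO⟩ := Finset.mem_biUnion.1 ((biUnion_cyclesOf σ).symm ▸ Finset.mem_univ a)
  exact h O hO a (Finset.mem_inter.2 ⟨ha, haO⟩)

theorem forall_cyclesOf_inter_ne_iff (σ : Equiv.Perm V) (S : Finset V) :
    (∀ O ∈ cyclesOf σ, S ∩ O ≠ O) ↔ ∀ v, ∃ k : ℕ, (σ ^ k) v ∉ S := by
  simp only [cyclesOf, Finset.mem_image, Finset.mem_univ, true_and, forall_exists_index,
    forall_apply_eq_imp_iff, ne_eq, Finset.inter_eq_right, Finset.not_subset, Finset.mem_filter]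
  refine forall_congr' fun v => ⟨fun ⟨u, hvu, hu⟩ => ?_, fun ⟨k, hk⟩ => ⟨_, ?_, hk⟩⟩
  · obtain ⟨k, -, rfl⟩ := hvu.exists_pow_eq'
    exact ⟨k, hu⟩
  · exact Equiv.Perm.sameCycle_pow_right.2 (Equiv.Perm.SameCycle.refl σ v)

end Cycles

theorem sum_filter_subset_apermSet {V : Type} [Fintype V] [DecidableEq V] {M : Type*}
    [AddCommMonoid M] (σ : Equiv.Perm V) (Q : Set (V × V) → Prop) [DecidablePred Q]
    (g : Finset (V × V) → M) :
    ∑ F ∈ Finset.univ.filter (fun F : Finset (V × V) => ↑F ⊆ ApermSet σ ∧ Q ↑F), g F =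
      ∑ S ∈ Finset.univ.filter (fun S : Finset V => Q (σ.graphEmbedding '' ↑S)),
        g (S.map σ.graphEmbedding) := by
  have hmap : ∀ F : Finset (V × V), ↑F ⊆ ApermSet σ →
      (F.image Prod.fst).map σ.graphEmbedding = F := by
    intro F hF
    ext ⟨a, b⟩
    simp only [Finset.mem_map, Finset.mem_image, Equiv.Perm.graphEmbedding_apply,
      Prod.mk.injEq]
    constructor
    · rintro ⟨_, ⟨⟨x, c⟩, hc, rfl⟩, rfl, rfl⟩
      obtain ⟨_, he⟩ := hF hc
      simp only [Prod.mk.injEq] at he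
      obtain ⟨rfl, rfl⟩ := he
      exact hc
    · intro hab
      obtain ⟨_, he⟩ := hF hab
      simp only [Prod.mk.injEq] at he
      exact ⟨a, ⟨_, hab, rfl⟩, rfl, he.1 ▸ he.2⟩
  have hfst : ∀ S : Finset V, (S.map σ.graphEmbedding).image Prod.fst = S := fun S => by
    ext; simp
  refine Finset.sum_nbij' (·.image Prod.fst) (·.map σ.graphEmbedding) ?_ ?_ ?_ ?_ ?_
  · intro F hF
    simp only [Finset.mem_filter, Finset.mem_univ, true_and] at hF ⊢
    rw [← Finset.coe_map, hmap F hF.1]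
    exact hF.2
  · intro S hS
    simp only [Finset.mem_filter, Finset.mem_univ, true_and] at hS ⊢
    rw [Finset.coe_map]
    exact ⟨Set.image_subset_range _ _, hS⟩
  · exact fun F hF => hmap F (Finset.mem_filter.1 hF).2.1
  · exact fun S _ => hfst S
  · exact fun F hF => by rw [hmap F (Finset.mem_filter.1 hF).2.1]

theorem sum_linear_subsets_eq_sum_subsets {V : Type} [Fintype V] [DecidableEq V]
    (A : Set (V × V)) (σ : Equiv.Perm V) :
    ∑ F ∈ Finset.univ.filter (fun F : Finset (V × V) =>
        (↑F : Set (V × V)) ⊆ ApermSet σ ∩ A ∧ IsLinear V ↑F), (-1 : ℤ) ^ F.card =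
      ∑ S ∈ Finset.univ.filter (fun S : Finset V =>
        ∀ O ∈ cyclesOf σ, (∀ a ∈ S ∩ O, (a, σ a) ∈ A) ∧ S ∩ O ≠ O), ∏ _a ∈ S, (-1 : ℤ) := by
  calc _ = ∑ F ∈ Finset.univ.filter (fun F : Finset (V × V) =>
          ↑F ⊆ ApermSet σ ∧ (↑F ⊆ A ∧ IsLinear V ↑F)), (-1 : ℤ) ^ F.card :=
        Finset.sum_congr (Finset.filter_congr fun F _ => by rw [Set.subset_inter_iff, and_assoc])
          fun _ _ => rfl
    _ = ∑ S ∈ Finset.univ.filter (fun S : Finset V =>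
          σ.graphEmbedding '' ↑S ⊆ A ∧ IsLinear V (σ.graphEmbedding '' ↑S)),
        (-1 : ℤ) ^ (S.map σ.graphEmbedding).card :=
        sum_filter_subset_apermSet σ (fun F => F ⊆ A ∧ IsLinear V F) _
    _ = _ := by
        refine Finset.sum_congr (Finset.filter_congr fun S _ => ?_) fun S _ => by
          rw [Finset.card_map, Finset.prod_const]
        rw [Set.image_subset_iff, isLinear_image_graphEmbedding_iff, forall₂_and,
          forall_cyclesOf_forall_mem_inter_iff, forall_cyclesOf_inter_ne_iff]
        rfl

/-- **Proposition (Grinberg–Stanley, Proposition 2.26).**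
`∑_{F ⊆ A_σ ∩ A linear} (-1)^{|F|}` equals `(-1)^{φ(σ)}` if `σ ∈ S_V(D,D̄)`,
and `0` otherwise. -/
theorem signed_sum_of_linear_subsets (V : Type) [Fintype V] [DecidableEq V]
    (A : Set (V × V)) (σ : Equiv.Perm V) :
    ∑ F ∈ Finset.univ.filter
        (fun F : Finset (V × V) =>
          (↑F : Set (V × V)) ⊆ ApermSet σ ∩ A ∧ IsLinear V (↑F : Set (V × V))),
      (-1 : ℤ) ^ F.card
      = if memSVDDbar A σ then (-1 : ℤ) ^ phi A σ else 0 := by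
  rw [sum_linear_subsets_eq_sum_subsets, ← Finset.powerset_univ, ← biUnion_cyclesOf σ]
  calc _ = ∏ O ∈ cyclesOf σ, ∑ S ∈ O.powerset with (∀ a ∈ S, (a, σ a) ∈ A) ∧ S ≠ O,
        (-1 : ℤ) ^ S.card := by
        convert Finset.sum_powerset_biUnion_filter_eq_prod _ (pairwiseDisjoint_cyclesOf σ)
          (fun O S => (∀ a ∈ S, (a, σ a) ∈ A) ∧ S ≠ O) (fun _ => (-1 : ℤ)) using 3
        rw [Finset.prod_const]
    _ = ∏ O ∈ cyclesOf σ, if ∀ a ∈ O, (a, σ a) ∈ A then (-1 : ℤ) ^ (O.card - 1)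
          else if ∀ a ∈ O, (a, σ a) ∉ A then 1 else 0 :=
        Finset.prod_congr rfl fun O hO => by
          convert Finset.sum_neg_one_pow_card_filter_ne (nonempty_of_mem_cyclesOf hO)
            fun a => (a, σ a) ∈ A
    _ = _ := by
        rw [Finset.prod_ite_ite_one_zero, Finset.prod_pow_eq_pow_sum]
        congr 1
end
end
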